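/- arXiv:2104.04229 — 2 statements merged into one kernel-verified Lean document; each statement's English description precedes it below -/
import Mathlib

section
/- Let T be a tree (connected acyclic graph) on vertex set V, let a ∈ V be a non-leaf or leaf vertex with neighbor set {c_1, ..., c_k} listed in some order. Then the graph obtained by deleting a and all edges incident to a, and adding the edges (c_1,c_2), (c_2,c_3), ..., (c_{k−1},c_k), is again a tree on V \ {a}. -/
/-!
Every vertex other than `a` is joined to some neighbour `c i` of `a` by a walk avoiding `a`, and
the new path links all the `c i`, so the graph is connected. Deleting `a` removes its `m ≥ 1`
edges, while the `m - 1` path edges are new because a tree has no triangles. The result is a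
connected graph with `|V| - 2` edges on `|V| - 1` vertices, hence a tree.
-/

/-- The graph obtained from `T` by deleting the vertex `a` and reconnecting its
neighbors `c 0, c 1, ..., c (m-1)` along a path. -/
def reconnect {V : Type*} (T : SimpleGraph V) (a : V) (m : ℕ) (c : Fin m → V) :
    SimpleGraph {v : V // v ≠ a} :=
  SimpleGraph.fromRel (fun u v =>
    T.Adj u.1 v.1 ∨ ∃ i j : Fin m, (j : ℕ) = (i : ℕ) + 1 ∧ u.1 = c i ∧ v.1 = c j)

namespace SimpleGraph

variable {V : Type*} {G : SimpleGraph V}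

lemma Preconnected.exists_adj_walk_notMem_support (hG : G.Preconnected) {a v : V} (hv : v ≠ a) :
    ∃ w, G.Adj a w ∧ ∃ p : G.Walk w v, a ∉ p.support := by
  classical
  obtain ⟨p, hp⟩ := (hG a v).some.toPath
  cases p with
  | nil => exact absurd rfl hv
  | cons h q => exact ⟨_, h, q, ((Walk.cons_isPath_iff h q).mp hp).2⟩

lemma notMem_incidenceSet_of_ne {a u v : V} (hu : u ≠ a) (hv : v ≠ a) :
    s(u, v) ∉ G.incidenceSet a :=
  fun ⟨_, ha⟩ => (Sym2.mem_iff.mp ha).elim (fun h => hu h.symm) (fun h => hv h.symm)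

end SimpleGraph

lemma Function.Injective.sym2_castSucc_succ {V : Type*} {n : ℕ} {c : Fin (n + 1) → V}
    (hc : Function.Injective c) :
    Function.Injective fun k : Fin n => s(c k.castSucc, c k.succ) := by
  intro i j h
  rcases Sym2.eq_iff.mp h with ⟨h1, -⟩ | ⟨h1, h2⟩
  · exact Fin.castSucc_injective _ (hc h1)
  · have h1 := congrArg Fin.val (hc h1)
    have h2 := congrArg Fin.val (hc h2)
    simp only [Fin.val_castSucc, Fin.val_succ] at h1 h2
    omega

open SimpleGraph

namespace reconnect

variable {V : Type*} {T : SimpleGraph V} {a : V} {m : ℕ} {c : Fin m → V}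

lemma adj_of_range_eq (hrange : Set.range c = T.neighborSet a) (i : Fin m) : T.Adj a (c i) :=
  show c i ∈ T.neighborSet a from hrange ▸ Set.mem_range_self i

def homOfInduce : T.induce {v | v ≠ a} →g reconnect T a m c where
  toFun v := ⟨v.1, v.2⟩
  map_rel' h := (fromRel_adj _ _ _).mpr ⟨fun e => h.ne (Subtype.ext (congrArg Subtype.val e)),
    Or.inl (Or.inl (induce_adj.mp h))⟩

def homOfPathGraph (hc : Function.Injective c) (hrange : Set.range c = T.neighborSet a) :
    pathGraph m →g reconnect T a m c where
  toFun i := ⟨c i, (adj_of_range_eq hrange i).ne'⟩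
  map_rel' {i j} h := by
    refine (fromRel_adj _ _ _).mpr ⟨fun e => h.ne (hc (congrArg Subtype.val e)), ?_⟩
    rcases pathGraph_adj.mp h with hij | hji
    · exact Or.inl (Or.inr ⟨i, j, hij.symm, rfl, rfl⟩)
    · exact Or.inr (Or.inr ⟨j, i, hji.symm, rfl, rfl⟩)

lemma reachable_of_walk {u v : {v : V // v ≠ a}} (p : T.Walk u v) (hp : a ∉ p.support) :
    (reconnect T a m c).Reachable u v :=
  ⟨(p.induce {v | v ≠ a} fun _ hx h => hp (h ▸ hx)).map homOfInduce⟩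

lemma exists_reachable (hT : T.Preconnected) (hrange : Set.range c = T.neighborSet a)
    (v : {v : V // v ≠ a}) :
    ∃ i, (reconnect T a m c).Reachable ⟨c i, (adj_of_range_eq hrange i).ne'⟩ v := by
  obtain ⟨w, haw, p, hp⟩ := hT.exists_adj_walk_notMem_support v.2
  obtain ⟨i, rfl⟩ : w ∈ Set.range c := hrange ▸ haw
  exact ⟨i, reachable_of_walk p hp⟩

theorem connected [Nontrivial V] (hT : T.Preconnected) (hc : Function.Injective c)
    (hrange : Set.range c = T.neighborSet a) : (reconnect T a m c).Connected := by
  have : Nonempty {v : V // v ≠ a} := let ⟨v, hv⟩ := exists_ne a; ⟨⟨v, hv⟩⟩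
  refine Connected.mk fun u v => ?_
  obtain ⟨i, hi⟩ := exists_reachable hT hrange u
  obtain ⟨j, hj⟩ := exists_reachable hT hrange v
  exact hi.symm.trans (((pathGraph_preconnected m i j).map (homOfPathGraph hc hrange)).trans hj)

lemma image_val_edgeSet {n : ℕ} {c : Fin (n + 1) → V} (hc : Function.Injective c)
    (hrange : Set.range c = T.neighborSet a) :
    Sym2.map Subtype.val '' (reconnect T a (n + 1) c).edgeSet =
      (T.edgeSet \ T.incidenceSet a) ∪ Set.range fun k : Fin n => s(c k.castSucc, c k.succ) := by
  ext e
  constructor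
  · rintro ⟨e, he, rfl⟩
    induction e using Sym2.ind with | _ u v => ?_
    rw [mem_edgeSet, reconnect, fromRel_adj] at he
    obtain ⟨-, (huv | ⟨i, j, hj, hu, hv⟩) | (hvu | ⟨i, j, hj, hv, hu⟩)⟩ := he
    · exact Or.inl ⟨huv, notMem_incidenceSet_of_ne u.2 v.2⟩
    · refine Or.inr ⟨⟨i, by omega⟩, ?_⟩
      simp only [Sym2.map_mk, hu, hv]
      congr 3
      exact Fin.ext hj.symm
    · exact Or.inl ⟨hvu.symm, notMem_incidenceSet_of_ne u.2 v.2⟩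
    · refine Or.inr ⟨⟨i, by omega⟩, ?_⟩
      simp only [Sym2.map_mk, hu, hv]
      rw [Sym2.eq_swap]
      congr 3
      exact Fin.ext hj.symm
  · rintro (⟨he, ha⟩ | ⟨k, rfl⟩)
    · induction e using Sym2.ind with | _ x y => ?_
      have hx : x ≠ a := fun h => ha ⟨he, h ▸ Sym2.mem_mk_left x y⟩
      have hy : y ≠ a := fun h => ha ⟨he, h ▸ Sym2.mem_mk_right x y⟩
      exact ⟨s(⟨x, hx⟩, ⟨y, hy⟩), homOfInduce.map_adj (G := T.induce {v | v ≠ a})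
        (v := ⟨x, hx⟩) (w := ⟨y, hy⟩) he, rfl⟩
    · exact ⟨s(_, _), (homOfPathGraph hc hrange).map_adj (v := k.castSucc) (w := k.succ)
        (pathGraph_adj.mpr (Or.inl rfl)), rfl⟩

theorem ncard_edgeSet_add_one {n : ℕ} {c : Fin (n + 1) → V} (hT : T.CliqueFree 3)
    (hfin : T.edgeSet.Finite) (hc : Function.Injective c)
    (hrange : Set.range c = T.neighborSet a) :
    (reconnect T a (n + 1) c).edgeSet.ncard + 1 = T.edgeSet.ncard := by
  have hinc : (T.incidenceSet a).ncard = n + 1 := by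
    classical
    rw [← Nat.card_coe_set_eq, Nat.card_congr (T.incidenceSetEquivNeighborSet a),
      Nat.card_coe_set_eq, ← hrange, Set.ncard_range_of_injective hc, Nat.card_fin]
  have hle : n + 1 ≤ T.edgeSet.ncard := hinc ▸ Set.ncard_le_ncard (T.incidenceSet_subset a) hfin
  have hdisj : Disjoint (T.edgeSet \ T.incidenceSet a)
      (Set.range fun k : Fin n => s(c k.castSucc, c k.succ)) := by
    rw [Set.disjoint_right]
    rintro _ ⟨k, rfl⟩ ⟨hk, -⟩
    exact isIndepSet_neighborSet_of_triangleFree T hT a (adj_of_range_eq hrange _)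
      (adj_of_range_eq hrange _) (hc.ne Fin.castSucc_lt_succ.ne) hk
  rw [← Set.ncard_image_of_injective _ (Sym2.map.injective Subtype.val_injective),
    image_val_edgeSet hc hrange, Set.ncard_union_eq hdisj hfin.sdiff (Set.finite_range _),
    Set.ncard_sdiff (T.incidenceSet_subset a) (hfin.subset (T.incidenceSet_subset a)), hinc,
    Set.ncard_range_of_injective hc.sym2_castSucc_succ, Nat.card_fin]
  omega

end reconnect

theorem stmt_7 {V : Type*} [Fintype V] (hcard : 2 ≤ Fintype.card V)
    (T : SimpleGraph V) (hT : T.IsTree) (a : V)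
    (m : ℕ) (c : Fin m → V) (hc : Function.Injective c)
    (hrange : Set.range c = T.neighborSet a) :
    (reconnect T a m c).IsTree := by
  have : Nontrivial V := Fintype.one_lt_card_iff_nontrivial.mp hcard
  obtain ⟨b, hb⟩ := exists_ne a
  obtain ⟨w, haw, -⟩ := hT.connected.preconnected.exists_adj_walk_notMem_support hb
  obtain ⟨n, rfl⟩ : ∃ n, m = n + 1 := by
    obtain ⟨i, -⟩ : w ∈ Set.range c := hrange ▸ haw
    exact Nat.exists_eq_add_one.mpr i.pos
  have hTcard := (isTree_iff_connected_and_card.mp hT).2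
  rw [isTree_iff_connected_and_card, Nat.card_coe_set_eq,
    reconnect.ncard_edgeSet_add_one (hT.isAcyclic.cliqueFree le_rfl) (Set.toFinite _) hc hrange]
  refine ⟨reconnect.connected hT.connected.preconnected hc hrange, ?_⟩
  classical
  rw [Nat.card_eq_fintype_card, Fintype.card_subtype_compl, Fintype.card_subtype_eq,
    ← Nat.card_eq_fintype_card, ← hTcard, Nat.card_coe_set_eq, Nat.add_sub_cancel]
end

section
/- Let G be a complete graph on a finite point set in ℝ² with Euclidean edge weights, let T be a spanning tree of G, and let a be a vertex of T with neighbors c_1, ..., c_k. Let T' be the tree on the remaining vertices obtained by deleting a and adding edges (c_i, c_{i+1}) for 1 ≤ i ≤ k−1. Then cost(T') ≤ cost(T) + Σ_{i=1}^{k} dist(c_i, a), and in particular cost(T') ≤ 2·cost(T). -/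
open scoped Classical

/-- Cost of a graph on finitely many vertices placed at points in the plane:
half the sum over ordered pairs of adjacent vertices of their Euclidean distance. -/
noncomputable def euclCost {V : Type*} [Fintype V]
    (pts : V → EuclideanSpace ℝ (Fin 2)) (G : SimpleGraph V) : ℝ :=
  (1 / 2) * ∑ u : V, ∑ v : V, if G.Adj u v then dist (pts u) (pts v) else 0

/-!
Deleting `a` removes exactly the edges from `a` to its neighbours, of total length
`D = ∑ dist (c i) a`, and keeps every other edge of `T`. The new path edges cost
`∑ dist (c i) (c (i+1)) ≤ ∑ (dist (c i) a + dist (c (i+1)) a) ≤ 2 D` by the triangle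
inequality, so `cost T' ≤ (cost T - D) + 2 D`; since `D ≤ cost T`, this is at most `2 cost T`.
-/

open Finset

lemma Function.Injective.sum_comp_eq_sum_ite {ι V M : Type*} [Fintype ι] [Fintype V]
    [AddCommMonoid M] {c : ι → V} (hc : c.Injective) {p : V → Prop} [DecidablePred p]
    (hrange : Set.range c = {v | p v}) (g : V → M) :
    ∑ i, g (c i) = ∑ v, if p v then g v else 0 := by
  have : univ.filter p = univ.map ⟨c, hc⟩ := by
    ext v
    simpa [eq_comm] using (Set.ext_iff.1 hrange v).symm
  rw [← sum_filter, this, sum_map]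
  rfl

lemma sum_ite_le_of_subsingleton {ι : Type*} [Fintype ι] {p : ι → Prop} [DecidablePred p]
    (hp : ∀ i j, p i → p j → i = j) {t : ℝ} (ht : 0 ≤ t) :
    (∑ i, if p i then t else 0) ≤ t := by
  rw [sum_ite, sum_const, sum_const_zero, add_zero, nsmul_eq_mul]
  refine mul_le_of_le_one_left ht ?_
  exact_mod_cast card_le_one.2 fun i hi j hj => hp i j (mem_filter.1 hi).2 (mem_filter.1 hj).2

lemma sum_sum_ite_exists_le {W ι : Type*} [Fintype W] [Fintype ι] (R : ι → ι → Prop)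
    [DecidableRel R] (e : ι → W) {f : W → W → ℝ} (hf : ∀ u v, 0 ≤ f u v) :
    (∑ u, ∑ v, if ∃ i j, R i j ∧ u = e i ∧ v = e j then f u v else 0) ≤
      ∑ i, ∑ j, if R i j then f (e i) (e j) else 0 := by
  have hnn : ∀ u v i j, 0 ≤ if R i j ∧ u = e i ∧ v = e j then f u v else 0 := by
    intro u v i j
    split_ifs
    exacts [hf u v, le_rfl]
  calc (∑ u, ∑ v, if ∃ i j, R i j ∧ u = e i ∧ v = e j then f u v else 0)
      ≤ ∑ u, ∑ v, ∑ i, ∑ j, if R i j ∧ u = e i ∧ v = e j then f u v else 0 := by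
        gcongr with u _ v _
        split_ifs with h
        · obtain ⟨i, j, hij⟩ := h
          refine le_trans ?_
            (single_le_sum (fun i' _ => sum_nonneg fun j' _ => hnn u v i' j') (mem_univ i))
          refine le_trans ?_ (single_le_sum (fun j' _ => hnn u v i j') (mem_univ j))
          rw [if_pos hij]
        · exact sum_nonneg fun i _ => sum_nonneg fun j _ => hnn u v i j
    _ = ∑ i, ∑ j, ∑ u, ∑ v, if R i j ∧ u = e i ∧ v = e j then f u v else 0 := by
        simp_rw [sum_comm (s := (univ : Finset W)) (t := (univ : Finset ι))]
    _ = ∑ i, ∑ j, if R i j then f (e i) (e j) else 0 := by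
        simp [ite_and]

lemma sum_consecutive_dist_le {E : Type*} [PseudoMetricSpace E] {m : ℕ} (x : Fin m → E)
    (y : E) :
    (∑ i : Fin m, ∑ j : Fin m, if (j : ℕ) = i + 1 then dist (x i) (x j) else 0) ≤
      2 * ∑ i, dist (x i) y := by
  calc (∑ i : Fin m, ∑ j : Fin m, if (j : ℕ) = i + 1 then dist (x i) (x j) else 0)
      ≤ ∑ i : Fin m, ∑ j : Fin m, ((if (j : ℕ) = i + 1 then dist (x i) y else 0) +
          if (j : ℕ) = i + 1 then dist (x j) y else 0) := by
        gcongr with i _ j _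
        split_ifs
        exacts [dist_triangle_right _ _ _, by simp]
    _ = (∑ i : Fin m, ∑ j : Fin m, if (j : ℕ) = i + 1 then dist (x i) y else 0) +
          ∑ j : Fin m, ∑ i : Fin m, if (j : ℕ) = i + 1 then dist (x j) y else 0 := by
        simp only [sum_add_distrib]
        congr 1
        exact sum_comm
    _ ≤ ∑ i, dist (x i) y + ∑ j, dist (x j) y := by
        gcongr with i _ j _
        · exact sum_ite_le_of_subsingleton (fun j k hj hk => Fin.ext (by omega)) dist_nonneg
        · exact sum_ite_le_of_subsingleton (fun i k hi hk => Fin.ext (by omega)) dist_nonneg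
    _ = 2 * ∑ i, dist (x i) y := by ring

lemma reconnect_eq_comap_sup_fromRel {V : Type*} (T : SimpleGraph V) (a : V) (m : ℕ)
    (c : Fin m → V) (hca : ∀ i, c i ≠ a) :
    reconnect T a m c = T.comap Subtype.val ⊔ SimpleGraph.fromRel fun u v =>
      ∃ i j : Fin m, (j : ℕ) = i + 1 ∧ u = ⟨c i, hca i⟩ ∧ v = ⟨c j, hca j⟩ := by
  ext u v
  simp only [reconnect, SimpleGraph.fromRel_adj, SimpleGraph.sup_adj, SimpleGraph.comap_adj,
    Subtype.ext_iff]
  constructor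
  · rintro ⟨huv, (h | h) | (h | h)⟩
    · exact Or.inl h
    · exact Or.inr ⟨huv, Or.inl h⟩
    · exact Or.inl h.symm
    · exact Or.inr ⟨huv, Or.inr h⟩
  · rintro (h | ⟨huv, h | h⟩)
    · exact ⟨fun huv => h.ne (congrArg Subtype.val huv), Or.inl (Or.inl h)⟩
    · exact ⟨huv, Or.inl (Or.inr h)⟩
    · exact ⟨huv, Or.inr (Or.inr h)⟩

section euclCost

variable {W : Type*} [Fintype W] (q : W → EuclideanSpace ℝ (Fin 2))

lemma euclCost_nonneg (G : SimpleGraph W) : 0 ≤ euclCost q G :=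
  mul_nonneg (by norm_num) <| sum_nonneg fun u _ => sum_nonneg fun v _ => by
    split_ifs
    exacts [dist_nonneg, le_rfl]

lemma euclCost_sup_le (G H : SimpleGraph W) :
    euclCost q (G ⊔ H) ≤ euclCost q G + euclCost q H := by
  unfold euclCost
  rw [← mul_add, ← sum_add_distrib]
  gcongr with u _
  rw [← sum_add_distrib]
  gcongr with v _
  simp only [SimpleGraph.sup_adj]
  split_ifs <;> simp_all [dist_nonneg]

lemma euclCost_fromRel_le (r : W → W → Prop) [DecidableRel r] :
    euclCost q (SimpleGraph.fromRel r) ≤ ∑ u, ∑ v, if r u v then dist (q u) (q v) else 0 := by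
  set A : W → W → ℝ := fun u v => if r u v then dist (q u) (q v) else 0
  calc euclCost q (SimpleGraph.fromRel r) ≤ 1 / 2 * ∑ u, ∑ v, (A u v + A v u) := by
        unfold euclCost
        gcongr with u _ v _
        simp only [A, SimpleGraph.fromRel_adj, dist_comm (q v)]
        split_ifs <;> simp_all [dist_nonneg]
    _ = ∑ u, ∑ v, A u v := by
        simp only [sum_add_distrib]
        rw [sum_comm (f := fun u v => A v u)]
        ring

lemma euclCost_fromRel_exists_le {ι : Type*} [Fintype ι] (R : ι → ι → Prop) [DecidableRel R]
    (e : ι → W) :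
    euclCost q (SimpleGraph.fromRel fun u v => ∃ i j, R i j ∧ u = e i ∧ v = e j) ≤
      ∑ i, ∑ j, if R i j then dist (q (e i)) (q (e j)) else 0 :=
  (euclCost_fromRel_le q _).trans (sum_sum_ite_exists_le R e fun _ _ => dist_nonneg)

lemma euclCost_eq_comap_add (G : SimpleGraph W) (a : W) :
    euclCost q G = euclCost (fun v : {v // v ≠ a} => q v.1) (G.comap Subtype.val) +
      ∑ v, if G.Adj a v then dist (q v) (q a) else 0 := by
  set F : W → W → ℝ := fun u v => if G.Adj u v then dist (q u) (q v) else 0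
  have haa : F a a = 0 := by simp [F]
  have hrow : ∑ v : {v // v ≠ a}, F a v = ∑ v, F a v := by
    rw [Fintype.sum_eq_add_sum_subtype_ne (F a) a, haa, zero_add]
  have hcol : ∑ u : {v // v ≠ a}, F u a = ∑ v, F a v := by
    rw [← hrow]
    simp only [F, G.adj_comm, _root_.dist_comm]
  have hsplit : ∑ u, ∑ v, F u v =
      ∑ u : {v // v ≠ a}, ∑ v : {v // v ≠ a}, F u v + 2 * ∑ v, F a v := by
    rw [Fintype.sum_eq_add_sum_subtype_ne _ a,
      sum_congr rfl fun (u : {v // v ≠ a}) _ => Fintype.sum_eq_add_sum_subtype_ne (F u) a,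
      sum_add_distrib, hcol]
    ring
  calc euclCost q G = 1 / 2 * ∑ u, ∑ v, F u v := rfl
    _ = 1 / 2 * ∑ u : {v // v ≠ a}, ∑ v : {v // v ≠ a}, F u v + ∑ v, F a v := by
        rw [hsplit]
        ring
    _ = _ := by
        simp only [F, _root_.dist_comm (q a)]
        rfl

end euclCost

theorem stmt_8_general {V : Type*} [Fintype V]
    (pts : V → EuclideanSpace ℝ (Fin 2))
    (T : SimpleGraph V) (a : V)
    (m : ℕ) (c : Fin m → V) (hc : Function.Injective c)
    (hrange : Set.range c = T.neighborSet a) :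
    euclCost (fun v : {v : V // v ≠ a} => pts v.1) (reconnect T a m c) ≤
        euclCost pts T + ∑ i : Fin m, dist (pts (c i)) (pts a) ∧
    euclCost (fun v : {v : V // v ≠ a} => pts v.1) (reconnect T a m c) ≤
        2 * euclCost pts T := by
  have hca : ∀ i, c i ≠ a := fun i => (hrange.le (Set.mem_range_self i)).ne'
  have hcostT : euclCost pts T = euclCost (fun v : {v : V // v ≠ a} => pts v.1)
      (T.comap Subtype.val) + ∑ i, dist (pts (c i)) (pts a) := by
    rw [euclCost_eq_comap_add pts T a,
      hc.sum_comp_eq_sum_ite hrange (fun v => dist (pts v) (pts a))]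
  have hcostT' : euclCost (fun v : {v : V // v ≠ a} => pts v.1) (reconnect T a m c) ≤
      euclCost (fun v : {v : V // v ≠ a} => pts v.1) (T.comap Subtype.val) +
        2 * ∑ i, dist (pts (c i)) (pts a) := by
    rw [reconnect_eq_comap_sup_fromRel T a m c hca]
    grw [euclCost_sup_le, euclCost_fromRel_exists_le,
      sum_consecutive_dist_le (fun i => pts (c i)) (pts a)]
  have := euclCost_nonneg (fun v : {v : V // v ≠ a} => pts v.1) (T.comap Subtype.val)
  constructor <;> linarith

theorem stmt_8 {V : Type*} [Fintype V]
    (pts : V → EuclideanSpace ℝ (Fin 2))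
    (T : SimpleGraph V) (hT : T.IsTree) (a : V)
    (m : ℕ) (c : Fin m → V) (hc : Function.Injective c)
    (hrange : Set.range c = T.neighborSet a) :
    euclCost (fun v : {v : V // v ≠ a} => pts v.1) (reconnect T a m c) ≤
        euclCost pts T + ∑ i : Fin m, dist (pts (c i)) (pts a) ∧
    euclCost (fun v : {v : V // v ≠ a} => pts v.1) (reconnect T a m c) ≤
        2 * euclCost pts T :=
  stmt_8_general pts T a m c hc hrange
end
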